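/- arXiv:2605.21848 — 3 statements merged into one kernel-verified Lean document; each statement's English description precedes it below -/
import Mathlib

section
/- For all real numbers a > 0 and b > 0, the integral over (0,1) of log(z) · z^{a/2−1} (1−z)^{b/2−1} with respect to z equals B(a/2, b/2) · (ψ(a/2) − ψ((a+b)/2)). -/
open MeasureTheory

/-- Beta function `B(a,b) = Γ(a)Γ(b)/Γ(a+b)`. -/
noncomputable def betaFn (a b : ℝ) : ℝ :=
  Real.Gamma a * Real.Gamma b / Real.Gamma (a + b)

/-- Digamma function `ψ(x) = d/dx log Γ(x)`. -/
noncomputable def digamma (x : ℝ) : ℝ :=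
  deriv (fun y => Real.log (Real.Gamma y)) x

/-!
With `p = a/2`, `q = b/2`, the Euler integral `∫₀¹ z^(s-1) (1-z)^(q-1) dz = B(s, q)` holds for
all `s > 0`. Differentiating it in `s` at `s = p` gives the integral of the theorem on the left
and, since `B(s, q) = exp (log Γ s + log Γ q - log Γ (s + q))`, the value
`B(p, q) (ψ p - ψ (p + q))` on the right. Differentiating under the integral sign is justified by
the domination `|log z| z^(s-1) ≤ (4/p) z^(p/4-1)` for `s > p/2`, which follows from
`|log z · z^δ| < 1/δ` on `(0, 1]`.
-/

open Real Set

lemma cpow_mul_one_sub_cpow_eq_ofReal {s t z : ℝ} (hz : z ∈ Ioo (0 : ℝ) 1) :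
    ((z : ℂ) ^ ((s : ℂ) - 1) * (1 - (z : ℂ)) ^ ((t : ℂ) - 1))
      = ((z ^ (s - 1) * (1 - z) ^ (t - 1) : ℝ) : ℂ) := by
  push_cast [Complex.ofReal_cpow hz.1.le, Complex.ofReal_cpow (sub_pos.2 hz.2).le]
  rfl

lemma integrableOn_rpow_mul_one_sub_rpow {s t : ℝ} (hs : 0 < s) (ht : 0 < t) :
    IntegrableOn (fun z : ℝ => z ^ (s - 1) * (1 - z) ^ (t - 1)) (Ioo 0 1) := by
  have hc := Complex.betaIntegral_convergent (u := s) (v := t) (by simpa) (by simpa)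
  rw [intervalIntegrable_iff_integrableOn_Ioc_of_le zero_le_one] at hc
  refine IntegrableOn.congr_fun (hc.mono_set Ioo_subset_Ioc_self).re (fun z hz => ?_)
    measurableSet_Ioo
  rw [cpow_mul_one_sub_cpow_eq_ofReal hz, RCLike.re_to_complex, Complex.ofReal_re]

lemma integral_rpow_mul_one_sub_rpow {s t : ℝ} (hs : 0 < s) (ht : 0 < t) :
    ∫ z in Ioo (0 : ℝ) 1, z ^ (s - 1) * (1 - z) ^ (t - 1) = betaFn s t := by
  have hB : Complex.betaIntegral s t
      = ((∫ z in Ioo (0 : ℝ) 1, z ^ (s - 1) * (1 - z) ^ (t - 1) : ℝ) : ℂ) := by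
    rw [Complex.betaIntegral, intervalIntegral.integral_of_le zero_le_one,
      integral_Ioc_eq_integral_Ioo]
    exact (setIntegral_congr_fun measurableSet_Ioo fun z hz =>
      cpow_mul_one_sub_cpow_eq_ofReal hz).trans integral_ofReal
  rw [betaFn, ← ProbabilityTheory.beta, ProbabilityTheory.beta_eq_betaIntegralReal s t hs ht,
    hB, Complex.ofReal_re]

lemma abs_log_mul_rpow_le {z : ℝ} (h0 : 0 < z) (h1 : z ≤ 1) {δ : ℝ} (hδ : 0 < δ) (x : ℝ) :
    |log z * z ^ x| ≤ δ⁻¹ * z ^ (x - δ) := by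
  have hsplit : log z * z ^ x = (log z * z ^ δ) * z ^ (x - δ) := by
    rw [mul_assoc, ← rpow_add h0, add_sub_cancel]
  rw [hsplit, abs_mul, abs_of_pos (rpow_pos_of_pos h0 _)]
  gcongr
  simpa using (abs_log_mul_self_rpow_lt z δ h0 h1 hδ).le

lemma hasDerivAt_integral_rpow_mul_one_sub_rpow {p q : ℝ} (hp : 0 < p) (hq : 0 < q) :
    HasDerivAt (fun s => ∫ z in Ioo (0 : ℝ) 1, z ^ (s - 1) * (1 - z) ^ (q - 1))
      (∫ z in Ioo (0 : ℝ) 1, log z * z ^ (p - 1) * (1 - z) ^ (q - 1)) p := by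
  have hbound := (integrableOn_rpow_mul_one_sub_rpow (s := p / 4) (by positivity) hq).const_mul
    (p / 4)⁻¹
  refine (hasDerivAt_integral_of_dominated_loc_of_deriv_le
    (F := fun s z => z ^ (s - 1) * (1 - z) ^ (q - 1))
    (F' := fun s z => log z * z ^ (s - 1) * (1 - z) ^ (q - 1))
    (Metric.ball_mem_nhds p (half_pos hp))
    (Filter.Eventually.of_forall fun s => by fun_prop)
    (integrableOn_rpow_mul_one_sub_rpow hp hq) (by fun_prop) ?_ hbound ?_).2
  · filter_upwards [ae_restrict_mem measurableSet_Ioo] with z hz s hs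
    have hs' : p / 2 < s := by
      have := abs_lt.1 (Real.dist_eq s p ▸ Metric.mem_ball.1 hs); linarith
    have h1z : 0 < 1 - z := sub_pos.2 hz.2
    rw [norm_mul, Real.norm_of_nonneg (rpow_nonneg h1z.le _), Real.norm_eq_abs, ← mul_assoc]
    gcongr
    calc |log z * z ^ (s - 1)| ≤ (p / 4)⁻¹ * z ^ (s - 1 - p / 4) :=
          abs_log_mul_rpow_le hz.1 hz.2.le (by positivity) _
      _ ≤ (p / 4)⁻¹ * z ^ (p / 4 - 1) := mul_le_mul_of_nonneg_left
          (rpow_le_rpow_of_exponent_ge hz.1 hz.2.le (by linarith)) (by positivity)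
  · filter_upwards [ae_restrict_mem measurableSet_Ioo] with z hz s _
    have h : HasDerivAt (fun s => z ^ (s - 1)) (z ^ (s - 1) * log z) s :=
      (hasStrictDerivAt_const_rpow hz.1 (s - 1)).hasDerivAt.comp_sub_const s 1
    rw [mul_comm (log z)]
    exact h.mul_const _

lemma hasDerivAt_log_Gamma {x : ℝ} (hx : 0 < x) :
    HasDerivAt (fun y => log (Gamma y)) (digamma x) x :=
  ((differentiableAt_Gamma fun m => ((neg_nonpos.2 m.cast_nonneg).trans_lt hx).ne').log
    (Gamma_pos_of_pos hx).ne').hasDerivAt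

lemma betaFn_eq_exp {s t : ℝ} (hs : 0 < s) (ht : 0 < t) :
    betaFn s t = exp (log (Gamma s) + log (Gamma t) - log (Gamma (s + t))) := by
  rw [exp_sub, exp_add, exp_log (Gamma_pos_of_pos hs), exp_log (Gamma_pos_of_pos ht),
    exp_log (Gamma_pos_of_pos (add_pos hs ht)), betaFn]

lemma hasDerivAt_betaFn_left {p q : ℝ} (hp : 0 < p) (hq : 0 < q) :
    HasDerivAt (fun s => betaFn s q) (betaFn p q * (digamma p - digamma (p + q))) p := by
  have hlog : HasDerivAt (fun s => log (Gamma s) + log (Gamma q) - log (Gamma (s + q)))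
      (digamma p - digamma (p + q)) p :=
    ((hasDerivAt_log_Gamma hp).add_const _).sub
      ((hasDerivAt_log_Gamma (add_pos hp hq)).comp_add_const p q)
  have h := hlog.exp
  rw [← betaFn_eq_exp hp hq] at h
  refine h.congr_of_eventuallyEq ?_
  filter_upwards [eventually_gt_nhds hp] with s hs using betaFn_eq_exp hs hq

theorem stmt_0 (a b : ℝ) (ha : 0 < a) (hb : 0 < b) :
    ∫ z in Set.Ioo (0 : ℝ) 1,
        Real.log z * z ^ (a / 2 - 1) * (1 - z) ^ (b / 2 - 1)
      = betaFn (a / 2) (b / 2) * (digamma (a / 2) - digamma ((a + b) / 2)) := by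
  have hp : 0 < a / 2 := half_pos ha
  have hq : 0 < b / 2 := half_pos hb
  have hEuler : (fun s => ∫ z in Ioo (0 : ℝ) 1, z ^ (s - 1) * (1 - z) ^ (b / 2 - 1))
      =ᶠ[nhds (a / 2)] fun s => betaFn s (b / 2) := by
    filter_upwards [eventually_gt_nhds hp] with s hs using integral_rpow_mul_one_sub_rpow hs hq
  rw [add_div]
  exact ((hasDerivAt_integral_rpow_mul_one_sub_rpow hp hq).congr_of_eventuallyEq
    hEuler.symm).unique (hasDerivAt_betaFn_left hp hq)
end

section
/- For every fixed real p > 0, the integral over (0,∞) of N · log(1 + p x/(N−p−1)) · (1 + p x/(N−p−1))^{−(N−1)/2} · (p x)^{p/2−1} with respect to x converges, as the real number N tends to infinity, to the integral over (0,∞) of (p x)^{p/2} · e^{−p x/2} with respect to x. -/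
/-!
Write `c = p x` and `a = p + 1`. Pointwise, `(N - a) log (1 + c/(N - a)) → c`, so the factor
`N log (1 + c/(N - a))` tends to `c` and `(1 + c/(N - a))^(-(N-1)/2)` tends to `exp (-c/2)`.
For domination, `log (1 + t) ≤ t` bounds the first factor by `2c` once `N ≥ 2a`, and since
`m ↦ (1 + c/m)^m` is increasing (Bernoulli) the second is at most `(1 + c/(2a))^(-a)` once
`N ≥ 2a + 1`. The resulting majorant `2 c^(p/2) (1 + c/(2a))^(-a)` is integrable because it behaves
like `c^(p/2)` at `0` and like `c^(-p/2-1)` at infinity.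
-/

open MeasureTheory Filter Real Set Topology

theorem one_add_div_rpow_le_of_le {c m₀ m : ℝ} (hc : 0 ≤ c) (hm₀ : 0 < m₀) (hm : m₀ ≤ m) :
    (1 + c / m₀) ^ m₀ ≤ (1 + c / m) ^ m := by
  have hm_pos : 0 < m := hm₀.trans_le hm
  -- Bernoulli's inequality with exponent `m / m₀ ≥ 1`
  have bernoulli : 1 + m / m₀ * (c / m) ≤ (1 + c / m) ^ (m / m₀) :=
    one_add_mul_self_le_rpow_one_add (by linarith [div_nonneg hc hm_pos.le])
      ((one_le_div hm₀).2 hm)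
  rw [show m / m₀ * (c / m) = c / m₀ by field_simp] at bernoulli
  calc (1 + c / m₀) ^ m₀ ≤ ((1 + c / m) ^ (m / m₀)) ^ m₀ := by gcongr
    _ = (1 + c / m) ^ m := by
      rw [← rpow_mul (by positivity), div_mul_cancel₀ _ hm₀.ne']

theorem tendsto_one_add_div_sub (a c : ℝ) :
    Tendsto (fun N => 1 + c / (N - a)) atTop (𝓝 1) := by
  have h_shift : Tendsto (fun N : ℝ => N - a) atTop atTop :=
    tendsto_atTop_add_const_right atTop (-a) tendsto_id
  simpa using (tendsto_const_nhds.div_atTop h_shift).const_add (1 : ℝ)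

theorem tendsto_sub_mul_log_one_add_div_sub (a b c : ℝ) :
    Tendsto (fun N => (N - b) * log (1 + c / (N - a))) atTop (𝓝 c) := by
  have h_main : Tendsto (fun N => (N - a) * log (1 + c / (N - a))) atTop (𝓝 c) :=
    (tendsto_mul_log_one_add_div_atTop c).comp
      (tendsto_atTop_add_const_right atTop (-a) tendsto_id)
  have h_log : Tendsto (fun N => log (1 + c / (N - a))) atTop (𝓝 0) := by
    simpa [Function.comp_def] using
      (continuousAt_log one_ne_zero).tendsto.comp (tendsto_one_add_div_sub a c)
  simpa [← add_mul] using h_main.add (h_log.const_mul (a - b))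

theorem tendsto_one_add_div_sub_rpow_neg_half (a c : ℝ) :
    Tendsto (fun N => (1 + c / (N - a)) ^ (-((N - 1) / 2))) atTop (𝓝 (exp (-(c / 2)))) := by
  have h_exponent : Tendsto (fun N => log (1 + c / (N - a)) * (-((N - 1) / 2))) atTop
      (𝓝 (-(c / 2))) := by
    convert (tendsto_sub_mul_log_one_add_div_sub a 1 c).const_mul (-(1 / 2)) using 2
    · ring
    · ring
  refine ((continuous_exp.tendsto _).comp h_exponent).congr' ?_
  filter_upwards [(tendsto_one_add_div_sub a c).eventually (lt_mem_nhds one_pos)] with N hN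
  exact (rpow_def_of_pos hN _).symm

theorem mul_log_one_add_div_sub_le {a c N : ℝ} (hc : 0 ≤ c) (ha : 0 < a) (hN : 2 * a ≤ N) :
    N * log (1 + c / (N - a)) ≤ 2 * c := by
  have hNa : 0 < N - a := by linarith
  calc N * log (1 + c / (N - a)) ≤ N * (c / (N - a)) := by
        gcongr
        · linarith
        · linarith [log_le_sub_one_of_pos (show 0 < 1 + c / (N - a) by positivity)]
    _ ≤ 2 * c := by
        rw [mul_div_assoc', div_le_iff₀ hNa]
        nlinarith

theorem one_add_div_sub_rpow_neg_le {a c N : ℝ} (hc : 0 ≤ c) (ha : 1 ≤ a)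
    (hN : 2 * a + 1 ≤ N) :
    (1 + c / (N - a)) ^ (-((N - 1) / 2)) ≤ (1 + c / (2 * a)) ^ (-a) := by
  have hN1 : 0 < N - 1 := by linarith
  have h_base : 0 ≤ 1 + c / (N - a) := by
    have := div_nonneg hc (show 0 ≤ N - a by linarith)
    linarith
  have h_mono := one_add_div_rpow_le_of_le (div_nonneg hc zero_le_two)
    (show 0 < a by linarith) (show a ≤ (N - 1) / 2 by linarith)
  rw [div_div, div_div_div_cancel_right₀ two_ne_zero] at h_mono
  rw [rpow_neg h_base, rpow_neg (by positivity)]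
  refine inv_anti₀ (by positivity) (h_mono.trans ?_)
  gcongr
  linarith

/-- The integrand of the theorem is `biltIntegrand (p + 1) (p / 2 - 1) N (p * x)`. -/
noncomputable def biltIntegrand (a s N c : ℝ) : ℝ :=
  N * log (1 + c / (N - a)) * (1 + c / (N - a)) ^ (-((N - 1) / 2)) * c ^ s

theorem measurable_biltIntegrand (a s N : ℝ) : Measurable (biltIntegrand a s N) := by
  unfold biltIntegrand
  fun_prop

theorem tendsto_biltIntegrand (a s : ℝ) {c : ℝ} (hc : 0 < c) :
    Tendsto (fun N => biltIntegrand a s N c) atTop (𝓝 (c ^ (s + 1) * exp (-(c / 2)))) := by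
  have h_prefactor := tendsto_sub_mul_log_one_add_div_sub a 0 c
  simp only [sub_zero] at h_prefactor
  have h := (h_prefactor.mul (tendsto_one_add_div_sub_rpow_neg_half a c)).mul_const (c ^ s)
  rwa [mul_right_comm, mul_comm c (c ^ s), ← rpow_add_one hc.ne'] at h

theorem norm_biltIntegrand_le {a s N c : ℝ} (hc : 0 < c) (ha : 1 ≤ a) (hN : 2 * a + 1 ≤ N) :
    ‖biltIntegrand a s N c‖ ≤ 2 * (c ^ (s + 1) * (1 + c / (2 * a)) ^ (-a)) := by
  have h_base : 1 ≤ 1 + c / (N - a) := by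
    have := div_nonneg hc.le (show 0 ≤ N - a by linarith)
    linarith
  have h_log := log_nonneg h_base
  have h_nonneg : 0 ≤ biltIntegrand a s N c := by
    unfold biltIntegrand
    have : 0 ≤ N := by linarith
    positivity
  rw [norm_of_nonneg h_nonneg, biltIntegrand, rpow_add_one hc.ne']
  calc N * log (1 + c / (N - a)) * (1 + c / (N - a)) ^ (-((N - 1) / 2)) * c ^ s
      ≤ 2 * c * (1 + c / (2 * a)) ^ (-a) * c ^ s := by
        gcongr ?_ * ?_ * _
        · exact mul_log_one_add_div_sub_le hc.le (by linarith) (by linarith)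
        · exact one_add_div_sub_rpow_neg_le hc.le ha hN
    _ = 2 * (c ^ s * c * (1 + c / (2 * a)) ^ (-a)) := by ring

theorem integrableOn_Ioi_rpow_mul_one_add_div_rpow_neg {s r k : ℝ} (hs : -1 < s)
    (hr : s + 1 < r) (hk : 0 < k) :
    IntegrableOn (fun c => c ^ s * (1 + c / k) ^ (-r)) (Ioi 0) := by
  have h_meas : AEStronglyMeasurable (fun c : ℝ => c ^ s * (1 + c / k) ^ (-r)) :=
    (by fun_prop : Measurable _).aestronglyMeasurable
  rw [← Ioc_union_Ioi_eq_Ioi zero_le_one, integrableOn_union]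
  constructor
  · have h_int : IntegrableOn (fun c : ℝ => c ^ s) (Ioc 0 1) :=
      ((intervalIntegral.integrableOn_Ioo_rpow_iff one_pos).2 hs).congr_set_ae Ioo_ae_eq_Ioc.symm
    refine h_int.mono' h_meas.restrict ((ae_restrict_iff' measurableSet_Ioc).2 (.of_forall ?_))
    rintro c ⟨hc, -⟩
    have h_le_one : (1 + c / k) ^ (-r) ≤ 1 :=
      rpow_le_one_of_one_le_of_nonpos (by linarith [div_nonneg hc.le hk.le]) (by linarith)
    rw [norm_of_nonneg (by positivity)]
    calc c ^ s * (1 + c / k) ^ (-r) ≤ c ^ s * 1 := by gcongr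
      _ = c ^ s := mul_one _
  · have h_int : IntegrableOn (fun c : ℝ => k ^ r * c ^ (s - r)) (Ioi 1) :=
      (integrableOn_Ioi_rpow_of_lt (by linarith) one_pos).const_mul _
    refine h_int.mono' h_meas.restrict ((ae_restrict_iff' measurableSet_Ioi).2 (.of_forall ?_))
    intro c (hc : 1 < c)
    have hc0 : 0 < c := one_pos.trans hc
    rw [norm_of_nonneg (by positivity)]
    calc c ^ s * (1 + c / k) ^ (-r) ≤ c ^ s * (c / k) ^ (-r) := by
          refine mul_le_mul_of_nonneg_left ?_ (by positivity)
          exact rpow_le_rpow_of_nonpos (by positivity) (by linarith) (by linarith)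
      _ = k ^ r * c ^ (s - r) := by
          rw [div_rpow hc0.le hk.le, rpow_neg hc0.le, rpow_neg hk.le, rpow_sub hc0]
          field_simp

theorem stmt_9 (p : ℝ) (hp : 0 < p) :
    Tendsto
      (fun N : ℝ =>
        ∫ x in Set.Ioi (0 : ℝ),
          N * Real.log (1 + p * x / (N - p - 1)) *
            (1 + p * x / (N - p - 1)) ^ (-((N - 1) / 2)) * (p * x) ^ (p / 2 - 1))
      atTop
      (nhds (∫ x in Set.Ioi (0 : ℝ), (p * x) ^ (p / 2) * Real.exp (-(p * x) / 2))) := by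
  simp_rw [sub_sub _ p 1]
  change Tendsto (fun N => ∫ x in Ioi 0, biltIntegrand (p + 1) (p / 2 - 1) N (p * x)) atTop _
  refine tendsto_integral_filter_of_dominated_convergence
    (fun x => 2 * ((p * x) ^ (p / 2) * (1 + p * x / (2 * (p + 1))) ^ (-(p + 1))))
    (.of_forall fun N =>
      ((measurable_biltIntegrand _ _ N).comp (measurable_const_mul p)).aestronglyMeasurable) ?_ ?_ ?_
  · filter_upwards [eventually_ge_atTop (2 * (p + 1) + 1)] with N hN
    refine (ae_restrict_iff' measurableSet_Ioi).2 (.of_forall fun x (hx : 0 < x) => ?_)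
    simpa only [sub_add_cancel] using
      norm_biltIntegrand_le (s := p / 2 - 1) (mul_pos hp hx) (by linarith) hN
  · refine (integrableOn_Ioi_comp_mul_left_iff
      (fun c => 2 * (c ^ (p / 2) * (1 + c / (2 * (p + 1))) ^ (-(p + 1)))) 0 hp).2 ?_
    rw [mul_zero]
    exact (integrableOn_Ioi_rpow_mul_one_add_div_rpow_neg (by linarith) (by linarith)
      (by positivity)).const_mul 2
  · refine (ae_restrict_iff' measurableSet_Ioi).2 (.of_forall fun x (hx : 0 < x) => ?_)
    simpa only [sub_add_cancel, neg_div] using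
      tendsto_biltIntegrand (p + 1) (p / 2 - 1) (mul_pos hp hx)
end

section
/- For every fixed real p > 0, the quantity N^2 · [ (ψ((N−1)/2) − ψ((N−p−1)/2))^2 − (ψ′((N−1)/2) − ψ′((N−p−1)/2)) ] tends to p(p+2) as the real number N tends to infinity. -/
open Filter

/-- Trigamma function `ψ′(x) = d²/dx² log Γ(x)`. -/
noncomputable def trigamma (x : ℝ) : ℝ :=
  deriv (deriv (fun y => Real.log (Real.Gamma y))) x

/-!
From `ψ(x + 1) = ψ(x) + 1/x` and `ψ(t + h) - ψ(t) → 0` (log-convexity of `Γ`) one gets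
`ψ(x + h) - ψ(x) = ∑ₙ (1/(x + n) - 1/(x + h + n))`, and termwise differentiation gives
`ψ′(x) = ∑ₙ 1/(x + n)²`. Comparing these series termwise with telescoping ones yields
`h/(x + h) ≤ ψ(x + h) - ψ(x) ≤ h/(x - 1)` and `1/(x - 1/2) - 1/(3(x - 1)³) ≤ ψ′(x) ≤ 1/(x - 1/2)`,
hence `x (ψ(x + h) - ψ(x)) → h` and `x² (ψ′(x) - ψ′(x + h)) → h`. With `x = (N - p - 1)/2` and
`h = p/2` the quantity is `(N (ψ(x + h) - ψ(x)))² + N² (ψ′(x) - ψ′(x + h))`, and `N ∼ 2x`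
gives the limit `p² + 2p`.
-/

open Real Set Topology

lemma hasSum_sub_succ_of_antitone {u : ℕ → ℝ} (hu : Antitone u)
    (hlim : Tendsto u atTop (𝓝 0)) : HasSum (fun n => u n - u (n + 1)) (u 0) := by
  rw [hasSum_iff_tendsto_nat_of_nonneg fun n => sub_nonneg.2 (hu n.le_succ)]
  simp_rw [Finset.sum_range_sub']
  simpa using tendsto_const_nhds.sub hlim

lemma hasSum_one_div_add_pow_sub {c : ℝ} (hc : 0 < c) {k : ℕ} (hk : k ≠ 0) :
    HasSum (fun n : ℕ => 1 / (c + n) ^ k - 1 / (c + n + 1) ^ k) (1 / c ^ k) := by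
  have hu : Antitone fun n : ℕ => 1 / (c + n) ^ k := fun m n hmn => by
    have : (m : ℝ) ≤ n := by exact_mod_cast hmn
    dsimp only
    gcongr
  have hlim : Tendsto (fun n : ℕ => 1 / (c + n) ^ k) atTop (𝓝 0) :=
    tendsto_const_nhds.div_atTop <| (tendsto_pow_atTop hk).comp <|
      tendsto_atTop_add_const_left _ c tendsto_natCast_atTop_atTop
  simpa [add_assoc] using hasSum_sub_succ_of_antitone hu hlim

lemma differentiableAt_log_Gamma {x : ℝ} (hx : 0 < x) :
    DifferentiableAt ℝ (fun y => log (Gamma y)) x :=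
  (differentiableAt_Gamma fun m => by linarith [(m.cast_nonneg : (0 : ℝ) ≤ m)]).log
    (Gamma_pos_of_pos hx).ne'

lemma log_Gamma_add_one {x : ℝ} (hx : 0 < x) :
    log (Gamma (x + 1)) = log (Gamma x) + log x := by
  rw [Gamma_add_one hx.ne', log_mul hx.ne' (Gamma_pos_of_pos hx).ne', add_comm]

lemma digamma_add_one {x : ℝ} (hx : 0 < x) : digamma (x + 1) = digamma x + 1 / x := by
  rw [digamma, digamma, ← deriv_comp_add_const, one_div, ← deriv_log,
    ← deriv_add (differentiableAt_log_Gamma hx) (differentiableAt_log hx.ne')]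
  refine EventuallyEq.deriv_eq ?_
  filter_upwards [eventually_gt_nhds hx] with y hy using log_Gamma_add_one hy

lemma digamma_add_nat {x : ℝ} (hx : 0 < x) (n : ℕ) :
    digamma (x + n) = digamma x + ∑ k ∈ Finset.range n, 1 / (x + k) := by
  induction n with
  | zero => simp
  | succ n ih =>
    rw [Nat.cast_succ, ← add_assoc, digamma_add_one (by positivity), ih, Finset.sum_range_succ,
      add_assoc]

lemma monotoneOn_digamma : MonotoneOn digamma (Ioi 0) :=
  convexOn_log_Gamma.monotoneOn_deriv fun _ hx => differentiableAt_log_Gamma hx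

lemma digamma_le_log {x : ℝ} (hx : 0 < x) : digamma x ≤ log x := by
  have := convexOn_log_Gamma.deriv_le_slope (mem_Ioi.2 hx) (mem_Ioi.2 (by linarith : 0 < x + 1))
    (by linarith) (differentiableAt_log_Gamma hx)
  rwa [slope_def_field, Function.comp_apply, Function.comp_apply, log_Gamma_add_one hx,
    add_sub_cancel_left, add_sub_cancel_left, div_one] at this

lemma log_sub_one_le_digamma {x : ℝ} (hx : 1 < x) : log (x - 1) ≤ digamma x := by
  have hx1 : 0 < x - 1 := by linarith
  have := convexOn_log_Gamma.slope_le_deriv (mem_Ioi.2 hx1) (mem_Ioi.2 (by linarith : 0 < x))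
    (by linarith) (differentiableAt_log_Gamma (by linarith))
  have hrec := log_Gamma_add_one hx1
  rw [sub_add_cancel] at hrec
  rwa [slope_def_field, Function.comp_apply, Function.comp_apply, hrec, add_sub_cancel_left,
    sub_sub_cancel, div_one] at this

lemma tendsto_sub_const_atTop (c : ℝ) : Tendsto (fun t : ℝ => t - c) atTop atTop :=
  tendsto_atTop_add_const_right atTop (-c) tendsto_id

lemma digamma_add_sub_le_add_one_div_sub_one {t h : ℝ} (ht : 1 < t) (hh : 0 ≤ h) :
    digamma (t + h) - digamma t ≤ (h + 1) / (t - 1) := by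
  have ht1 : 0 < t - 1 := by linarith
  calc digamma (t + h) - digamma t ≤ log (t + h) - log (t - 1) :=
        sub_le_sub (digamma_le_log (by linarith)) (log_sub_one_le_digamma ht)
    _ = log ((t + h) / (t - 1)) := (log_div (by linarith) ht1.ne').symm
    _ ≤ (t + h) / (t - 1) - 1 := log_le_sub_one_of_pos (by positivity)
    _ = (h + 1) / (t - 1) := by field_simp; ring

lemma tendsto_digamma_add_sub {h : ℝ} (hh : 0 ≤ h) :
    Tendsto (fun t => digamma (t + h) - digamma t) atTop (𝓝 0) := by
  refine tendsto_of_tendsto_of_tendsto_of_le_of_le' tendsto_const_nhds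
    ((tendsto_const_nhds (x := h + 1)).div_atTop (tendsto_sub_const_atTop 1)) ?_ ?_
  · filter_upwards [eventually_gt_atTop 0] with t ht
    exact sub_nonneg.2 (monotoneOn_digamma ht (mem_Ioi.2 (by linarith)) (by linarith))
  · filter_upwards [eventually_gt_atTop 1] with t ht using
    digamma_add_sub_le_add_one_div_sub_one ht hh

lemma hasSum_digamma_sub {x y : ℝ} (hy : 0 < y) (hyx : y ≤ x) :
    HasSum (fun n : ℕ => 1 / (y + n) - 1 / (x + n)) (digamma x - digamma y) := by
  rw [hasSum_iff_tendsto_nat_of_nonneg fun n => sub_nonneg.2 <|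
    one_div_le_one_div_of_le (by positivity) (by linarith)]
  have hpartial : ∀ n : ℕ, ∑ k ∈ Finset.range n, (1 / (y + k) - 1 / (x + k)) =
      digamma x - digamma y - (digamma (y + n + (x - y)) - digamma (y + n)) := by
    intro n
    rw [add_right_comm, add_sub_cancel, digamma_add_nat (by linarith), digamma_add_nat hy,
      Finset.sum_sub_distrib]
    ring
  simp_rw [hpartial]
  simpa using tendsto_const_nhds.sub ((tendsto_digamma_add_sub (sub_nonneg.2 hyx)).comp
    (tendsto_atTop_add_const_left _ y tendsto_natCast_atTop_atTop))

lemma summable_one_div_add_sq {c : ℝ} (hc : 0 < c) : Summable fun n : ℕ => 1 / (c + n) ^ 2 := by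
  refine ((summable_one_div_nat_add_rpow c 2).2 one_lt_two).congr fun n => ?_
  rw [abs_of_pos (by positivity), rpow_two, add_comm]

lemma hasDerivAt_digamma {x : ℝ} (hx : 0 < x) :
    HasDerivAt digamma (∑' n : ℕ, 1 / (x + n) ^ 2) x := by
  have hc : 0 < x / 2 := by linarith
  have hx_mem : x ∈ Ioi (x / 2) := mem_Ioi.2 (by linarith)
  have hseries : HasDerivAt (fun z => ∑' n : ℕ, (1 / (x / 2 + n) - 1 / (z + n)))
      (∑' n : ℕ, 1 / (x + n) ^ 2) x := by
    refine hasDerivAt_tsum_of_isPreconnected (g := fun (n : ℕ) z => 1 / (x / 2 + n) - 1 / (z + n))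
      (g' := fun (n : ℕ) y => 1 / (y + n) ^ 2) (summable_one_div_add_sq hc) isOpen_Ioi
      isPreconnected_Ioi (fun n y hy => ?_) (fun n y hy => ?_) hx_mem
      (hasSum_digamma_sub hc (le_of_lt hx_mem)).summable hx_mem
    · have hy0 : y + n ≠ 0 := by have : 0 < y := hc.trans hy; positivity
      simpa [one_div] using
        ((hasDerivAt_inv hy0).comp y ((hasDerivAt_id' y).add_const (n : ℝ))).const_sub _
    · have : x / 2 < y := hy
      rw [norm_of_nonneg (by positivity)]
      gcongr
  refine (hseries.const_add (digamma (x / 2))).congr_of_eventuallyEq ?_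
  filter_upwards [isOpen_Ioi.mem_nhds hx_mem] with z hz
  rw [(hasSum_digamma_sub hc (le_of_lt hz)).tsum_eq]
  ring

lemma trigamma_eq_tsum {x : ℝ} (hx : 0 < x) : trigamma x = ∑' n : ℕ, 1 / (x + n) ^ 2 :=
  (hasDerivAt_digamma hx).deriv

lemma hasSum_one_div_add_sub {c : ℝ} (hc : 0 < c) :
    HasSum (fun n : ℕ => 1 / (c + n) - 1 / (c + n + 1)) (1 / c) := by
  simpa using hasSum_one_div_add_pow_sub hc one_ne_zero

lemma div_add_le_digamma_add_sub {x h : ℝ} (hx : 0 < x) (hh : 0 ≤ h) :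
    h / (x + h) ≤ digamma (x + h) - digamma x := by
  have hterm (n : ℕ) :
      h * (1 / (x + h + n) - 1 / (x + h + n + 1)) ≤ 1 / (x + n) - 1 / (x + h + n) := by
    have key : 1 / (x + n) - 1 / (x + h + n) - h * (1 / (x + h + n) - 1 / (x + h + n + 1)) =
        h * (h + 1) / ((x + n) * (x + h + n) * (x + h + n + 1)) := by
      field_simp
      ring
    rw [← sub_nonneg, key]
    positivity
  simpa only [mul_one_div] using hasSum_le hterm
    ((hasSum_one_div_add_sub (by positivity)).mul_left h) (hasSum_digamma_sub hx (by linarith))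

lemma digamma_add_sub_le_div_sub_one {x h : ℝ} (hx : 1 < x) (hh : 0 ≤ h) :
    digamma (x + h) - digamma x ≤ h / (x - 1) := by
  have hterm (n : ℕ) :
      1 / (x + n) - 1 / (x + h + n) ≤ h * (1 / (x - 1 + n) - 1 / (x - 1 + n + 1)) := by
    have hw : 0 < x - 1 + n := by positivity
    have key : h * (1 / (x - 1 + n) - 1 / (x - 1 + n + 1)) - (1 / (x + n) - 1 / (x + h + n)) =
        h * (h + 1) / ((x - 1 + n) * (x + n) * (x + h + n)) := by
      rw [show x - 1 + n + 1 = x + n by ring]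
      field_simp
      ring
    rw [← sub_nonneg, key]
    positivity
  simpa only [mul_one_div] using hasSum_le hterm (hasSum_digamma_sub (by linarith) (by linarith))
    ((hasSum_one_div_add_sub (by linarith)).mul_left h)

lemma one_div_add_half_sq_le {w : ℝ} (hw : 0 < w) :
    1 / (w + 1 / 2) ^ 2 ≤ 1 / w - 1 / (w + 1) := by
  have key : 1 / w - 1 / (w + 1) - 1 / (w + 1 / 2) ^ 2 =
      1 / (w * (w + 1) * (2 * w + 1) ^ 2) := by
    field_simp
    ring
  rw [← sub_nonneg, key]
  positivity

lemma one_div_add_half_sub_le {w : ℝ} (hw : 0 < w) :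
    1 / (w + 1 / 2) - 1 / (w + 1 / 2 + 1) - 1 / 3 * (1 / w ^ 3 - 1 / (w + 1) ^ 3) ≤
      1 / (w + 1) ^ 2 := by
  have key : 1 / (w + 1) ^ 2 -
      (1 / (w + 1 / 2) - 1 / (w + 1 / 2 + 1) - 1 / 3 * (1 / w ^ 3 - 1 / (w + 1) ^ 3)) =
        (9 * w ^ 4 + 33 * w ^ 3 + 37 * w ^ 2 + 17 * w + 3) /
          (3 * w ^ 3 * (w + 1) ^ 3 * (2 * w + 1) * (2 * w + 3)) := by
    field_simp
    ring
  rw [← sub_nonneg, key]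
  positivity

lemma trigamma_le_one_div_sub_half {x : ℝ} (hx : 1 / 2 < x) : trigamma x ≤ 1 / (x - 1 / 2) := by
  have hterm (n : ℕ) : 1 / (x + n) ^ 2 ≤ 1 / (x - 1 / 2 + n) - 1 / (x - 1 / 2 + n + 1) := by
    have hw : 0 < x - 1 / 2 + n := by positivity
    rw [show x + n = x - 1 / 2 + n + 1 / 2 by ring]
    exact one_div_add_half_sq_le hw
  rw [trigamma_eq_tsum (by linarith)]
  exact hasSum_le hterm (summable_one_div_add_sq (by linarith)).hasSum
    (hasSum_one_div_add_sub (by linarith))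

lemma one_div_sub_half_sub_le_trigamma {x : ℝ} (hx : 1 < x) :
    1 / (x - 1 / 2) - 1 / 3 * (1 / (x - 1) ^ 3) ≤ trigamma x := by
  have hterm (n : ℕ) : 1 / (x - 1 / 2 + n) - 1 / (x - 1 / 2 + n + 1)
      - 1 / 3 * (1 / (x - 1 + n) ^ 3 - 1 / (x - 1 + n + 1) ^ 3) ≤ 1 / (x + n) ^ 2 := by
    have hw : 0 < x - 1 + n := by positivity
    rw [show x - 1 / 2 + n = x - 1 + n + 1 / 2 by ring, show x + n = x - 1 + n + 1 by ring]
    exact one_div_add_half_sub_le hw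
  rw [trigamma_eq_tsum (by linarith)]
  exact hasSum_le hterm ((hasSum_one_div_add_sub (by linarith)).sub
    ((hasSum_one_div_add_pow_sub (by linarith) three_ne_zero).mul_left (1 / 3)))
    (summable_one_div_add_sq (by linarith)).hasSum

lemma tendsto_div_add_const_atTop (c : ℝ) :
    Tendsto (fun x : ℝ => x / (x + c)) atTop (𝓝 1) := by
  have h : Tendsto (fun x : ℝ => 1 - c / (x + c)) atTop (𝓝 (1 - 0)) := tendsto_const_nhds.sub
    (tendsto_const_nhds.div_atTop (tendsto_atTop_add_const_right _ c tendsto_id))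
  rw [sub_zero] at h
  refine h.congr' ?_
  filter_upwards [eventually_gt_atTop (-c)] with x hx
  have : x + c ≠ 0 := by linarith
  field_simp
  ring

lemma tendsto_pow_mul_comp_mul_add {f : ℝ → ℝ} {k : ℕ} {L α : ℝ}
    (hf : Tendsto (fun x => x ^ k * f x) atTop (𝓝 L)) (hα : 0 < α) (β : ℝ) :
    Tendsto (fun x => x ^ k * f (α * x + β)) atTop (𝓝 (L / α ^ k)) := by
  have hlin : Tendsto (fun x => α * x + β) atTop atTop :=
    tendsto_atTop_add_const_right _ β (tendsto_id.const_mul_atTop hα)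
  have hratio : Tendsto (fun x => x / (α * x + β)) atTop (𝓝 (1 / α)) := by
    have := (tendsto_div_add_const_atTop (β / α)).const_mul (1 / α)
    rw [mul_one] at this
    refine this.congr fun x => ?_
    rw [show α * x + β = α * (x + β / α) by field_simp, div_mul_eq_div_div_swap]
    ring
  have := (hratio.pow k).mul (hf.comp hlin)
  rw [one_div_pow, one_div_mul_eq_div] at this
  refine this.congr' ?_
  filter_upwards [hlin.eventually_ne_atTop 0] with x hx
  simp only [Function.comp_apply, div_pow]
  field_simp

lemma tendsto_mul_digamma_add_sub {h : ℝ} (hh : 0 ≤ h) :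
    Tendsto (fun x => x * (digamma (x + h) - digamma x)) atTop (𝓝 h) := by
  have hlow := (tendsto_div_add_const_atTop h).const_mul h
  have hup := (tendsto_div_add_const_atTop (-1)).const_mul h
  rw [mul_one] at hlow hup
  refine tendsto_of_tendsto_of_tendsto_of_le_of_le' hlow hup ?_ ?_
  all_goals
    filter_upwards [eventually_gt_atTop 1] with x hx
    rw [mul_div_left_comm]
    gcongr
  · exact div_add_le_digamma_add_sub (by linarith) hh
  · simpa only [← sub_eq_add_neg] using digamma_add_sub_le_div_sub_one hx hh

lemma tendsto_sq_mul_one_div_sub_half_sub_trigamma :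
    Tendsto (fun x => x ^ 2 * (1 / (x - 1 / 2) - trigamma x)) atTop (𝓝 0) := by
  have hup : Tendsto (fun x : ℝ => 1 / 3 * ((x / (x + -1)) ^ 2 * (1 / (x - 1)))) atTop
      (𝓝 (1 / 3 * (1 ^ 2 * 0))) :=
    (((tendsto_div_add_const_atTop (-1)).pow 2).mul
      (tendsto_const_nhds.div_atTop (tendsto_sub_const_atTop 1))).const_mul _
  simp only [mul_zero] at hup
  refine tendsto_of_tendsto_of_tendsto_of_le_of_le' tendsto_const_nhds hup ?_ ?_
  all_goals filter_upwards [eventually_gt_atTop 1] with x hx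
  · exact mul_nonneg (sq_nonneg x) (sub_nonneg.2 (trigamma_le_one_div_sub_half (by linarith)))
  · have hx1 : x - 1 ≠ 0 := by linarith
    calc x ^ 2 * (1 / (x - 1 / 2) - trigamma x) ≤ x ^ 2 * (1 / 3 * (1 / (x - 1) ^ 3)) := by
          gcongr
          linarith [one_div_sub_half_sub_le_trigamma hx]
      _ = 1 / 3 * ((x / (x + -1)) ^ 2 * (1 / (x - 1))) := by
          rw [← sub_eq_add_neg]
          field_simp

lemma tendsto_sq_mul_trigamma_sub_trigamma_add (h : ℝ) :
    Tendsto (fun x => x ^ 2 * (trigamma x - trigamma (x + h))) atTop (𝓝 h) := by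
  have hmain :
      Tendsto (fun x => x ^ 2 * (1 / (x - 1 / 2) - 1 / (x + h - 1 / 2))) atTop (𝓝 h) := by
    have := ((tendsto_div_add_const_atTop (-1 / 2)).mul
      (tendsto_div_add_const_atTop (h - 1 / 2))).const_mul h
    rw [mul_one, mul_one] at this
    refine this.congr' ?_
    filter_upwards [eventually_gt_atTop (|h| + 1)] with x hx
    have h1 : x - 1 / 2 ≠ 0 := by linarith [abs_nonneg h]
    have h2 : x + h - 1 / 2 ≠ 0 := by linarith [neg_abs_le h]
    rw [div_mul_div_comm, mul_div_assoc', div_sub_div _ _ h1 h2, mul_div_assoc']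
    congr 1 <;> ring
  have herr := tendsto_sq_mul_one_div_sub_half_sub_trigamma
  have herr_shift := tendsto_pow_mul_comp_mul_add herr one_pos h
  simp only [one_mul, one_pow, div_one] at herr_shift
  simpa using (hmain.sub herr).add herr_shift |>.congr fun x => by ring

theorem stmt_12 (p : ℝ) (hp : 0 < p) :
    Tendsto
      (fun N : ℝ =>
        N ^ 2 *
          ((digamma ((N - 1) / 2) - digamma ((N - p - 1) / 2)) ^ 2
            - (trigamma ((N - 1) / 2) - trigamma ((N - p - 1) / 2))))
      atTop (nhds (p * (p + 2))) := by
  have hdigamma := tendsto_pow_mul_comp_mul_add (k := 1)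
    (by simpa using tendsto_mul_digamma_add_sub (by positivity : 0 ≤ p / 2))
    (by norm_num : (0 : ℝ) < 1 / 2) (-(p + 1) / 2)
  have htrigamma := tendsto_pow_mul_comp_mul_add (tendsto_sq_mul_trigamma_sub_trigamma_add (p / 2))
    (by norm_num : (0 : ℝ) < 1 / 2) (-(p + 1) / 2)
  convert (hdigamma.pow 2).add htrigamma using 1
  · ext N
    rw [show (N - 1) / 2 = 1 / 2 * N + -(p + 1) / 2 + p / 2 by ring,
      show (N - p - 1) / 2 = 1 / 2 * N + -(p + 1) / 2 by ring]
    ring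
  · congr 1
    ring
end
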